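/- The group ⟨s₁,s₂,v,h | [s₁,h], [s₂,h], s₁²h, s₂²h, vhv⁻¹h, s₁s₂v²h⟩ is isomorphic to the group ⟨s,v | sv²s⁻¹ = v⁻², vs²v⁻¹ = s⁻²⟩, via the map sending s₁ ↦ s, s₂ ↦ sv⁻², h ↦ s⁻². -/

import Mathlib

/-!
Tietze transformations. The relators `s₁²h` and `s₁s₂v²h` solve for the redundant generators,
`h = s₁⁻²` and `s₂ = s₁v⁻²`. After substituting them, `[s₁,h]` and `s₁²h` become trivial,
`s₂²h` says `(sv⁻²)² = s²`, which is equivalent to `sv²s⁻¹ = v⁻²`, and `vhv⁻¹h` becomes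
`vs²v⁻¹ = s⁻²`. The remaining relator `[s₂,h]` is a consequence: conjugation by `v` inverts `s²`,
so `v²` commutes with `s²`.
-/

open FreeGroup

/-- Relators of π₁(M₆) = ⟨s₁,s₂,v,h | [s₁,h], [s₂,h], s₁²h, s₂²h, vhv⁻¹h, s₁s₂v²h⟩,
generators s₁=0, s₂=1, v=2, h=3. -/
def relsM6 : Set (FreeGroup (Fin 4)) :=
  { of 0 * of 3 * (of 0)⁻¹ * (of 3)⁻¹,
    of 1 * of 3 * (of 1)⁻¹ * (of 3)⁻¹,
    of 0 ^ 2 * of 3, of 1 ^ 2 * of 3,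
    of 2 * of 3 * (of 2)⁻¹ * of 3,
    of 0 * of 1 * of 2 ^ 2 * of 3 }

/-- Relators of ⟨s,v | sv²s⁻¹ = v⁻², vs²v⁻¹ = s⁻²⟩, generators s=0, v=1. -/
def relsM6' : Set (FreeGroup (Fin 2)) :=
  { of 0 * of 1 ^ 2 * (of 0)⁻¹ * of 1 ^ 2,
    of 1 * of 0 ^ 2 * (of 1)⁻¹ * of 0 ^ 2 }

theorem PresentedGroup.lift_of_eq_one {α : Type*} {rels : Set (FreeGroup α)} :
    ∀ r ∈ rels, FreeGroup.lift (PresentedGroup.of (rels := rels)) r = 1 := fun _ hr ↦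
  (lift_unique (PresentedGroup.mk rels) fun _ ↦ rfl).symm.trans (PresentedGroup.one_of_mem hr)

section
variable {G : Type*} [Group G]

theorem mul_inv_mul_inv_of_mul_mul_inv_eq_inv {b x : G} (h : b * x * b⁻¹ = x⁻¹) :
    b * x⁻¹ * b⁻¹ = x := by
  simpa only [mul_inv_rev, inv_inv, mul_assoc] using congrArg (·⁻¹) h

theorem commute_sq_of_mul_mul_inv_eq_inv {b x : G} (h : b * x * b⁻¹ = x⁻¹) :
    Commute (b ^ 2) x := by
  rw [Commute, SemiconjBy, ← mul_inv_eq_iff_eq_mul]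
  calc b ^ 2 * x * (b ^ 2)⁻¹ = b * (b * x * b⁻¹) * b⁻¹ := by simp only [sq]; group
    _ = x := by rw [h, mul_inv_mul_inv_of_mul_mul_inv_eq_inv h]

theorem lift_relsM6_eq_one_iff (f : Fin 4 → G) :
    (∀ r ∈ relsM6, FreeGroup.lift f r = 1) ↔
      Commute (f 0) (f 3) ∧ Commute (f 1) (f 3) ∧ f 0 ^ 2 * f 3 = 1 ∧ f 1 ^ 2 * f 3 = 1 ∧
      f 2 * f 3 * (f 2)⁻¹ * f 3 = 1 ∧ f 0 * f 1 * f 2 ^ 2 * f 3 = 1 := by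
  simp [relsM6, ← commutatorElement_def, commutatorElement_eq_one_iff_commute]

theorem lift_relsM6'_eq_one_iff (f : Fin 2 → G) :
    (∀ r ∈ relsM6', FreeGroup.lift f r = 1) ↔
      f 0 * f 1 ^ 2 * (f 0)⁻¹ * f 1 ^ 2 = 1 ∧ f 1 * f 0 ^ 2 * (f 1)⁻¹ * f 0 ^ 2 = 1 := by
  simp [relsM6']

theorem lift_relsM6_of_relsM6' {f : Fin 2 → G} (hf : ∀ r ∈ relsM6', FreeGroup.lift f r = 1) :
    ∀ r ∈ relsM6, FreeGroup.lift ![f 0, f 0 * (f 1 ^ 2)⁻¹, f 1, (f 0 ^ 2)⁻¹] r = 1 := by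
  obtain ⟨hs, hv⟩ := (lift_relsM6'_eq_one_iff f).1 hf
  set s := f 0
  set v := f 1
  have hsv : s * v ^ 2 * s⁻¹ = (v ^ 2)⁻¹ := eq_inv_of_mul_eq_one_left hs
  have hvs : v * s ^ 2 * v⁻¹ = (s ^ 2)⁻¹ := eq_inv_of_mul_eq_one_left hv
  have hcomm : Commute (v ^ 2) (s ^ 2) := commute_sq_of_mul_mul_inv_eq_inv hvs
  rw [lift_relsM6_eq_one_iff]
  simp only [Matrix.cons_val]
  refine ⟨(Commute.self_pow s 2).inv_right, ?_, by group, ?_, ?_, by group⟩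
  · exact ((Commute.self_pow s 2).mul_left hcomm.inv_left).inv_right
  · calc (s * (v ^ 2)⁻¹) ^ 2 * (s ^ 2)⁻¹
          = (s * (v ^ 2)⁻¹ * s⁻¹) * (s ^ 2 * (v ^ 2)⁻¹) * (s ^ 2)⁻¹ := by simp only [sq]; group
        _ = v ^ 2 * ((v ^ 2)⁻¹ * s ^ 2) * (s ^ 2)⁻¹ := by
          rw [mul_inv_mul_inv_of_mul_mul_inv_eq_inv hsv, hcomm.inv_left.eq]
        _ = 1 := by group
  · rw [mul_inv_mul_inv_of_mul_mul_inv_eq_inv hvs, mul_inv_cancel]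

theorem inv_sq_eq_of_lift_relsM6 {f : Fin 4 → G} (hf : ∀ r ∈ relsM6, FreeGroup.lift f r = 1) :
    (f 0 ^ 2)⁻¹ = f 3 :=
  (eq_inv_of_mul_eq_one_right ((lift_relsM6_eq_one_iff f).1 hf).2.2.1).symm

theorem mul_inv_sq_eq_of_lift_relsM6 {f : Fin 4 → G}
    (hf : ∀ r ∈ relsM6, FreeGroup.lift f r = 1) : f 0 * (f 2 ^ 2)⁻¹ = f 1 := by
  obtain ⟨-, -, -, -, -, h⟩ := (lift_relsM6_eq_one_iff f).1 hf
  rw [← inv_sq_eq_of_lift_relsM6 hf] at h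
  calc f 0 * (f 2 ^ 2)⁻¹ = (f 0)⁻¹ * 1 * f 0 ^ 2 * (f 2 ^ 2)⁻¹ := by simp only [sq]; group
    _ = f 1 := by rw [← h]; simp only [sq]; group

theorem lift_relsM6'_of_relsM6 {f : Fin 4 → G} (hf : ∀ r ∈ relsM6, FreeGroup.lift f r = 1) :
    ∀ r ∈ relsM6', FreeGroup.lift ![f 0, f 2] r = 1 := by
  obtain ⟨-, -, -, hs, hv, -⟩ := (lift_relsM6_eq_one_iff f).1 hf
  rw [← inv_sq_eq_of_lift_relsM6 hf] at hs hv
  rw [← mul_inv_sq_eq_of_lift_relsM6 hf] at hs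
  rw [lift_relsM6'_eq_one_iff]
  simp only [Matrix.cons_val]
  set s := f 0
  set v := f 2
  constructor
  · generalize v ^ 2 = V at hs ⊢
    simp only [sq] at hs
    calc s * V * s⁻¹ * V = s * (s⁻¹ * (s * V⁻¹ * (s * V⁻¹) * (s * s)⁻¹) * (s * s))⁻¹ := by group
      _ = 1 := by rw [hs]; group
  · have hvs := mul_inv_mul_inv_of_mul_mul_inv_eq_inv (eq_inv_of_mul_eq_one_left hv)
    rw [inv_inv] at hvs
    rw [hvs, inv_mul_cancel]

end

def toM6' : PresentedGroup relsM6 →* PresentedGroup relsM6' :=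
  PresentedGroup.toGroup (lift_relsM6_of_relsM6' PresentedGroup.lift_of_eq_one)

def ofM6' : PresentedGroup relsM6' →* PresentedGroup relsM6 :=
  PresentedGroup.toGroup (lift_relsM6'_of_relsM6 PresentedGroup.lift_of_eq_one)

/-- π₁(M₆) is isomorphic to ⟨s,v | sv²s⁻¹ = v⁻², vs²v⁻¹ = s⁻²⟩ via
s₁ ↦ s, s₂ ↦ sv⁻², v ↦ v, h ↦ s⁻². -/
theorem stmt11 :
    ∃ e : PresentedGroup relsM6 ≃* PresentedGroup relsM6',
      e (PresentedGroup.of 0) = PresentedGroup.of 0 ∧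
      e (PresentedGroup.of 1) =
        PresentedGroup.of 0 * ((PresentedGroup.of 1)⁻¹ * (PresentedGroup.of 1)⁻¹) ∧
      e (PresentedGroup.of 2) = PresentedGroup.of 1 ∧
      e (PresentedGroup.of 3) = (PresentedGroup.of 0)⁻¹ * (PresentedGroup.of 0)⁻¹ := by
  have h_left : ofM6'.comp toM6' = MonoidHom.id _ := by
    ext i
    fin_cases i <;> simp [toM6', ofM6',
      inv_sq_eq_of_lift_relsM6 (f := PresentedGroup.of) PresentedGroup.lift_of_eq_one,
      mul_inv_sq_eq_of_lift_relsM6 (f := PresentedGroup.of) PresentedGroup.lift_of_eq_one]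
  have h_right : toM6'.comp ofM6' = MonoidHom.id _ := by
    ext i
    fin_cases i <;> simp [toM6', ofM6']
  refine ⟨toM6'.toMulEquiv ofM6' h_left h_right, ?_, ?_, ?_, ?_⟩ <;> simp [toM6', sq]
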